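/- Theorem 1 (convergence of EXP-D-RL in monotone games): let ε > 0, γ > 0, consider N players with action counts n^p, n = Σ_p n^p, strategy space Δ = Π_p Δ^{n^p} ⊂ ℝⁿ, blockwise soft-max σ : ℝⁿ → ℝⁿ, and a Lipschitz continuous payoff map U : Δ → ℝⁿ such that −U is monotone on Δ, i.e., (x − x')ᵀ(U(x) − U(x')) ≤ 0 for all x, x' ∈ Δ. Assume the set of fixed points {z ∈ ℝⁿ : z = U(σ(z))} is finite. Then for every differentiable solution z : [0, ∞) → ℝⁿ of ż(t) = γ(U(σ(z(t))) − z(t)), there exists a fixed point z̄* = U(σ(z̄*)) such that z(t) → z̄* as t → ∞, and consequently σ(z(t)) → σ(z̄*) as t → ∞. -/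

import Mathlib

open Filter

/-- The soft-max function with temperature `ε`. -/
noncomputable def softmax (ε : ℝ) {m : ℕ} (w : Fin m → ℝ) : Fin m → ℝ :=
  fun i => Real.exp (w i / ε) / ∑ j, Real.exp (w j / ε)

/-- The blockwise soft-max `σ(z) = (σ_ε(z^p))_p`. -/
noncomputable def softmaxBlk (ε : ℝ) {N : ℕ} {nAct : Fin N → ℕ}
    (z : ∀ p, Fin (nAct p) → ℝ) : ∀ p, Fin (nAct p) → ℝ :=
  fun p => softmax ε (z p)

/-- The strategy space `Δ = Π_p Δ^{n^p}`. -/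
def simplexProd (N : ℕ) (nAct : Fin N → ℕ) : Set (∀ p, Fin (nAct p) → ℝ) :=
  {x | ∀ p, (∀ i, 0 ≤ x p i) ∧ ∑ i, x p i = 1}

/-!
A fixed point `z̄* = U(σ z̄*)` exists: on a simplex truncated away from its faces,
the operator `x ↦ ε log x - U x` is strongly monotone and Lipschitz, so its variational
inequality is solved by the fixed point of a projected contraction; monotonicity of `-U` and
boundedness of `U` keep the solution off the faces, and there it is blockwise constant, i.e.
`x = σ(U x)`.

Along a trajectory put `x̄* = σ z̄*` and `W(t) = Σ_p KL(x̄*_p ‖ σ(z^p(t)))`. Up to a constant,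
`ε W` is a log-sum-exp minus a linear function of `z`, so `ε Ẇ = ⟨σ z - x̄*, ż⟩`. Splitting
`U(σ z) - z = (U(σ z) - U x̄*) - (z - z̄*)`, the monotonicity of `-U` and the identity
`⟨σ a - σ b, a - b⟩ = ε (KL(σ a‖σ b) + KL(σ b‖σ a))` give `Ẇ ≤ -γ W`, so `W → 0`. A
Hellinger-type bound turns this into `σ(z(t)) → x̄*`; then `U(σ(z(t))) → z̄*`, and each
coordinate of `z`, driven by `ż = γ (U(σ z) - z)`, follows its input to `z̄*`.
-/

open Real Topology
open scoped RealInnerProductSpace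

lemma tendsto_zero_of_hasDerivAt_le_neg_mul_add {f f' g : ℝ → ℝ} {γ : ℝ} (hγ : 0 < γ)
    (hf : ∀ t, 0 ≤ t → HasDerivAt f (f' t) t) (hf' : ∀ t, 0 ≤ t → f' t ≤ -γ * f t + g t)
    (hg : Tendsto g atTop (𝓝 0)) (hf0 : ∀ t, 0 ≤ f t) : Tendsto f atTop (𝓝 0) := by
  refine tendsto_order.2 ⟨fun a ha => Eventually.of_forall fun t => ha.trans_le (hf0 t),
    fun a ha => ?_⟩
  obtain ⟨T₀, hT₀⟩ := eventually_atTop.1 (hg.eventually_lt_const (by positivity : 0 < γ * a / 2))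
  set T := max T₀ 0
  -- past `T`, Grönwall bounds `f` by a function tending to `a / 2`
  have hgronwall : ∀ t, T ≤ t → f t ≤ gronwallBound (f T) (-γ) (γ * a / 2) (t - T) := by
    intro t ht
    have hfT : ∀ s, T ≤ s → HasDerivAt f (f' s) s := fun s hs => hf s ((le_max_right _ _).trans hs)
    refine le_gronwallBound_of_liminf_deriv_right_le (f' := f')
      (fun s hs => (hfT s hs.1).continuousAt.continuousWithinAt)
      (fun s hs r hr => (hfT s hs.1).hasDerivWithinAt.liminf_right_slope_le hr)
      le_rfl (fun s hs => ?_) t ⟨ht, le_rfl⟩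
    have := hT₀ s ((le_max_left _ _).trans hs.1)
    linarith [hf' s ((le_max_right _ _).trans hs.1)]
  have hbound : Tendsto (fun t => gronwallBound (f T) (-γ) (γ * a / 2) (t - T)) atTop
      (𝓝 (f T * 0 + γ * a / 2 / -γ * (0 - 1))) := by
    have hexp : Tendsto (fun t => exp (-γ * (t - T))) atTop (𝓝 0) :=
      tendsto_exp_atBot.comp <| (tendsto_atTop_add_const_right _ (-T) tendsto_id)
        |>.const_mul_atTop_of_neg (neg_neg_of_pos hγ)
    simp only [gronwallBound_of_K_ne_0 (neg_ne_zero.2 hγ.ne')]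
    exact (hexp.const_mul _).add ((hexp.sub_const 1).const_mul _)
  have hlim : f T * 0 + γ * a / 2 / -γ * (0 - 1) < a := by
    field_simp; linarith
  filter_upwards [hbound.eventually_lt_const hlim, eventually_ge_atTop T] with t h1 h2
  exact (hgronwall t h2).trans_lt h1

lemma tendsto_of_hasDerivAt_mul_sub {y u : ℝ → ℝ} {l γ : ℝ} (hγ : 0 < γ)
    (hy : ∀ t, 0 ≤ t → HasDerivAt y (γ * (u t - y t)) t) (hu : Tendsto u atTop (𝓝 l)) :
    Tendsto y atTop (𝓝 l) := by
  have hsq : Tendsto (fun t => (y t - l) ^ 2) atTop (𝓝 0) := by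
    refine tendsto_zero_of_hasDerivAt_le_neg_mul_add hγ
      (f' := fun t => 2 * (y t - l) * (γ * (u t - y t)))
      (fun t ht => (((hy t ht).sub_const l).pow 2).congr_deriv (by push_cast; ring))
      (g := fun t => γ * (u t - l) ^ 2)
      (fun t _ => ?_) (by simpa using ((hu.sub_const l).pow 2).const_mul γ) (fun t => sq_nonneg _)
    nlinarith [mul_nonneg hγ.le (sq_nonneg (y t - u t))]
  rw [← tendsto_sub_nhds_zero_iff, tendsto_zero_iff_abs_tendsto_zero]
  simpa [Function.comp_def, sqrt_sq_eq_abs] using hsq.sqrt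

lemma mul_log_sub_log_le_sub {p q : ℝ} (hp : 0 < p) (hq : 0 < q) :
    q * (log p - log q) ≤ p - q := by
  have h := log_le_sub_one_of_pos (div_pos hp hq)
  rw [log_div hp.ne' hq.ne', le_sub_iff_add_le, le_div_iff₀ hq] at h
  linarith

lemma abs_log_sub_log_le {a b c : ℝ} (hc : 0 < c) (ha : c ≤ a) (hb : c ≤ b) :
    |log a - log b| ≤ |a - b| / c := by
  wlog hba : b ≤ a generalizing a b
  · rw [abs_sub_comm, abs_sub_comm a]; exact this hb ha (le_of_not_ge hba)
  have hb0 := hc.trans_le hb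
  have h := mul_log_sub_log_le_sub (hc.trans_le ha) hb0
  rw [abs_of_nonneg (sub_nonneg.2 (log_le_log hb0 hba)), abs_of_nonneg (sub_nonneg.2 hba),
    le_div_iff₀ hc]
  nlinarith [sub_nonneg.2 (log_le_log hb0 hba)]

lemma sq_sub_le_sub_mul_log_sub_log {a b : ℝ} (ha : 0 < a) (ha1 : a ≤ 1) (hb : 0 < b)
    (hb1 : b ≤ 1) :
    (a - b) ^ 2 ≤ (a - b) * (log a - log b) := by
  wlog hba : b ≤ a generalizing a b
  · have := this hb hb1 ha ha1 (le_of_not_ge hba); nlinarith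
  have h := mul_log_sub_log_le_sub hb ha
  nlinarith [sub_nonneg.2 hba, sub_nonneg.2 ha1, sub_nonneg.2 (log_le_log hb hba)]

lemma sq_sqrt_sub_sqrt_le {p q : ℝ} (hp : 0 < p) (hq : 0 < q) :
    (√q - √p) ^ 2 ≤ q * (log q - log p) - (q - p) := by
  have h := mul_log_sub_log_le_sub (sqrt_pos.2 hp) (sqrt_pos.2 hq)
  have hlog : ∀ x : ℝ, 0 ≤ x → log x = 2 * log √x := fun x hx => by
    rw [log_sqrt hx]; ring
  rw [hlog p hp.le, hlog q hq.le]
  nlinarith [mul_le_mul_of_nonneg_left h (sqrt_nonneg q), sq_sqrt hp.le, sq_sqrt hq.le]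

section RelEntropy

variable {ι : Type*} [Fintype ι]

noncomputable def relEntropy (q p : ι → ℝ) : ℝ := ∑ i, q i * (log (q i) - log (p i))

variable {q p : ι → ℝ}

lemma sum_sq_sqrt_sub_sqrt_le_relEntropy (hq : ∀ i, 0 < q i) (hp : ∀ i, 0 < p i)
    (hsum : ∑ i, q i = ∑ i, p i) : ∑ i, (√(q i) - √(p i)) ^ 2 ≤ relEntropy q p := by
  calc ∑ i, (√(q i) - √(p i)) ^ 2
      ≤ ∑ i, (q i * (log (q i) - log (p i)) - (q i - p i)) :=
        Finset.sum_le_sum fun i _ => sq_sqrt_sub_sqrt_le (hp i) (hq i)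
    _ = relEntropy q p := by
        rw [Finset.sum_sub_distrib, Finset.sum_sub_distrib, hsum, sub_self, sub_zero, relEntropy]

lemma relEntropy_nonneg (hq : ∀ i, 0 < q i) (hp : ∀ i, 0 < p i)
    (hsum : ∑ i, q i = ∑ i, p i) : 0 ≤ relEntropy q p :=
  (Finset.sum_nonneg fun _ _ => sq_nonneg _).trans
    (sum_sq_sqrt_sub_sqrt_le_relEntropy hq hp hsum)

lemma sq_sub_le_four_mul_relEntropy (hq : ∀ i, 0 < q i) (hp : ∀ i, 0 < p i)
    (hq1 : ∑ i, q i = 1) (hp1 : ∑ i, p i = 1) (i : ι) :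
    (q i - p i) ^ 2 ≤ 4 * relEntropy q p := by
  have hle : ∀ (x : ι → ℝ), (∀ j, 0 < x j) → ∑ j, x j = 1 → √(x i) ≤ 1 := fun x hx hx1 =>
    sqrt_le_one.2 (hx1 ▸ Finset.single_le_sum (fun j _ => (hx j).le) (Finset.mem_univ i))
  have hsingle : (√(q i) - √(p i)) ^ 2 ≤ relEntropy q p :=
    (Finset.single_le_sum (f := fun j => (√(q j) - √(p j)) ^ 2) (fun j _ => sq_nonneg _)
      (Finset.mem_univ i)).trans (sum_sq_sqrt_sub_sqrt_le_relEntropy hq hp (hq1.trans hp1.symm))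
  have hfactor : (q i - p i) ^ 2 = (√(q i) - √(p i)) ^ 2 * (√(q i) + √(p i)) ^ 2 := by
    rw [← mul_pow]; congr 1; nlinarith [sq_sqrt (hq i).le, sq_sqrt (hp i).le]
  rw [hfactor]
  have h2 : (√(q i) + √(p i)) ^ 2 ≤ 4 := by
    nlinarith [hle q hq hq1, hle p hp hp1, sqrt_nonneg (q i), sqrt_nonneg (p i)]
  nlinarith [sq_nonneg (√(q i) - √(p i))]

end RelEntropy

section Softmax

variable (ε : ℝ) {m : ℕ}

lemma sum_exp_div_pos (hm : 0 < m) (w : Fin m → ℝ) : 0 < ∑ j, exp (w j / ε) :=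
  Finset.sum_pos (fun _ _ => exp_pos _) ⟨⟨0, hm⟩, Finset.mem_univ _⟩

lemma softmax_pos (hm : 0 < m) (w : Fin m → ℝ) (i : Fin m) : 0 < softmax ε w i :=
  div_pos (exp_pos _) (sum_exp_div_pos ε hm w)

lemma sum_softmax (hm : 0 < m) (w : Fin m → ℝ) : ∑ i, softmax ε w i = 1 := by
  simp only [softmax, ← Finset.sum_div]
  exact div_self (sum_exp_div_pos ε hm w).ne'

lemma log_softmax (hm : 0 < m) (w : Fin m → ℝ) (i : Fin m) :
    log (softmax ε w i) = w i / ε - log (∑ j, exp (w j / ε)) := by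
  rw [softmax, log_div (exp_pos _).ne' (sum_exp_div_pos ε hm w).ne', log_exp]

lemma softmax_eq_of_forall_mul_log_sub_eq {x u : Fin m → ℝ} (hε : ε ≠ 0) (hx : ∀ k, 0 < x k)
    (hx1 : ∑ k, x k = 1) (hconst : ∀ j k, ε * log (x j) - u j = ε * log (x k) - u k) :
    softmax ε u = x := by
  funext k
  set c := ε * log (x k) - u k
  have hexp : ∀ j, exp (u j / ε) = x j * exp (-c / ε) := fun j => by
    rw [← exp_log (hx j), ← exp_add]
    congr 1
    field_simp
    linarith [hconst j k]
  simp only [softmax, hexp, ← Finset.sum_mul, hx1, one_mul]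
  exact mul_div_cancel_right₀ _ (exp_pos _).ne'

lemma relEntropy_softmax_eq (hm : 0 < m) {q : Fin m → ℝ} (hq : ∑ i, q i = 1)
    (w : Fin m → ℝ) :
    relEntropy q (softmax ε w) =
      ∑ i, q i * log (q i) - ∑ i, q i * w i / ε + log (∑ j, exp (w j / ε)) := by
  simp only [relEntropy, log_softmax ε hm, mul_sub, Finset.sum_sub_distrib, ← Finset.sum_mul, hq,
    mul_div_assoc]
  ring

lemma hasDerivAt_relEntropy_softmax (hm : 0 < m) {q : Fin m → ℝ} (hq : ∑ i, q i = 1)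
    {y : ℝ → Fin m → ℝ} {y' : Fin m → ℝ} {t : ℝ}
    (hy : ∀ i, HasDerivAt (fun s => y s i) (y' i) t) :
    HasDerivAt (fun s => relEntropy q (softmax ε (y s)))
      ((∑ i, (softmax ε (y t) i - q i) * y' i) / ε) t := by
  have hsum : HasDerivAt (fun s => ∑ j, exp (y s j / ε)) (∑ j, exp (y t j / ε) * (y' j / ε)) t :=
    HasDerivAt.fun_sum fun j _ => ((hy j).div_const ε).exp
  have hlin : HasDerivAt (fun s => ∑ i, q i * y s i / ε) (∑ i, q i * y' i / ε) t :=
    HasDerivAt.fun_sum fun i _ => ((hy i).const_mul (q i)).div_const ε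
  simp only [relEntropy_softmax_eq ε hm hq]
  refine (((hasDerivAt_const t (∑ i, q i * log (q i))).sub hlin).add
    (hsum.log (sum_exp_div_pos ε hm (y t)).ne')).congr_deriv ?_
  simp only [softmax, sub_mul, Finset.sum_sub_distrib, sub_div, Finset.sum_div, zero_sub,
    neg_add_eq_sub]
  congr 1
  exact Finset.sum_congr rfl fun i _ => by ring

lemma inner_softmax_sub_softmax (hε : ε ≠ 0) (hm : 0 < m) (a b : Fin m → ℝ) :
    ∑ i, (softmax ε a i - softmax ε b i) * (a i - b i) =
      ε * (relEntropy (softmax ε a) (softmax ε b) + relEntropy (softmax ε b) (softmax ε a)) := by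
  have hdiff : ∀ i, a i - b i = ε * (log (softmax ε a i) - log (softmax ε b i)) +
      ε * (log (∑ j, exp (a j / ε)) - log (∑ j, exp (b j / ε))) := fun i => by
    rw [log_softmax ε hm, log_softmax ε hm]; field_simp; ring
  have hzero : ∑ i, (softmax ε a i - softmax ε b i) = 0 := by
    rw [Finset.sum_sub_distrib, sum_softmax ε hm, sum_softmax ε hm, sub_self]
  calc ∑ i, (softmax ε a i - softmax ε b i) * (a i - b i)
      = ∑ i, (softmax ε a i - softmax ε b i) * (ε * (log (softmax ε a i) - log (softmax ε b i))) +
          (∑ i, (softmax ε a i - softmax ε b i)) *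
            (ε * (log (∑ j, exp (a j / ε)) - log (∑ j, exp (b j / ε)))) := by
        simp only [hdiff, mul_add, Finset.sum_add_distrib, Finset.sum_mul]
    _ = _ := by
        rw [hzero, zero_mul, add_zero, relEntropy, relEntropy, ← Finset.sum_add_distrib,
          Finset.mul_sum]
        exact Finset.sum_congr rfl fun i _ => by ring

end Softmax

lemma softmaxBlk_mem_simplexProd {ε : ℝ} {N : ℕ} {nAct : Fin N → ℕ} (hn : ∀ p, 0 < nAct p)
    (w : ∀ p, Fin (nAct p) → ℝ) : softmaxBlk ε w ∈ simplexProd N nAct :=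
  fun p => ⟨fun i => (softmax_pos ε (hn p) (w p) i).le, sum_softmax ε (hn p) (w p)⟩

lemma isCompact_simplexProd (N : ℕ) (nAct : Fin N → ℕ) : IsCompact (simplexProd N nAct) := by
  have : simplexProd N nAct = Set.univ.pi fun p => stdSimplex ℝ (Fin (nAct p)) := by
    ext; simp [simplexProd, stdSimplex]
  rw [this]
  exact isCompact_univ_pi fun p => isCompact_stdSimplex ℝ (Fin (nAct p))

section VariationalInequality

variable {H : Type*} [NormedAddCommGroup H] [InnerProductSpace ℝ H]

lemma norm_sub_le_of_forall_inner_le_zero {K : Set H} {u₁ u₂ v₁ v₂ : H} (hv₁ : v₁ ∈ K)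
    (hv₂ : v₂ ∈ K) (h₁ : ∀ w ∈ K, ⟪u₁ - v₁, w - v₁⟫ ≤ 0) (h₂ : ∀ w ∈ K, ⟪u₂ - v₂, w - v₂⟫ ≤ 0) :
    ‖v₁ - v₂‖ ≤ ‖u₁ - u₂‖ := by
  have hsq : ‖v₁ - v₂‖ ^ 2 ≤ ⟪u₁ - u₂, v₁ - v₂⟫ := by
    have h₁₂ := h₁ v₂ hv₂
    have h₂₁ := h₂ v₁ hv₁
    have hdecomp : ⟪u₁ - u₂, v₁ - v₂⟫ =
        ‖v₁ - v₂‖ ^ 2 - ⟪u₁ - v₁, v₂ - v₁⟫ - ⟪u₂ - v₂, v₁ - v₂⟫ := by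
      rw [← real_inner_self_eq_norm_sq, ← neg_sub v₁ v₂, inner_neg_right]
      rw [sub_neg_eq_add, ← inner_add_left, ← inner_sub_left]
      congr 1; abel
    linarith
  have hcs := (hsq.trans (real_inner_le_norm _ _))
  rcases (norm_nonneg (v₁ - v₂)).eq_or_lt with h | h
  · rw [← h]; exact norm_nonneg _
  · nlinarith

lemma norm_sub_smul_sub_sub_smul_sq_le {v w a b : H} {η μ Λ : ℝ}
    (hmono : μ * ‖v - w‖ ^ 2 ≤ ⟪a - b, v - w⟫) (hlip : ‖a - b‖ ≤ Λ * ‖v - w‖) (hη : 0 ≤ η) :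
    ‖(v - η • a) - (w - η • b)‖ ^ 2 ≤ (1 - 2 * η * μ + η ^ 2 * Λ ^ 2) * ‖v - w‖ ^ 2 := by
  have hrw : (v - η • a) - (w - η • b) = (v - w) - η • (a - b) := by
    rw [smul_sub]; abel
  have hlip2 : ‖a - b‖ ^ 2 ≤ (Λ * ‖v - w‖) ^ 2 := pow_le_pow_left₀ (norm_nonneg _) hlip 2
  rw [hrw, norm_sub_sq_real, real_inner_smul_right, norm_smul, real_inner_comm, Real.norm_eq_abs,
    abs_of_nonneg hη]
  nlinarith [mul_le_mul_of_nonneg_left hmono hη, mul_le_mul_of_nonneg_left hlip2 (sq_nonneg η)]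

theorem exists_forall_inner_nonneg_of_strongly_monotone [CompleteSpace H] {K : Set H}
    (hne : K.Nonempty) (hcl : IsClosed K) (hco : Convex ℝ K) {F : H → H} {μ Λ : ℝ} (hμ : 0 < μ)
    (hmono : ∀ v ∈ K, ∀ w ∈ K, μ * ‖v - w‖ ^ 2 ≤ ⟪F v - F w, v - w⟫)
    (hlip : ∀ v ∈ K, ∀ w ∈ K, ‖F v - F w‖ ≤ Λ * ‖v - w‖) :
    ∃ v ∈ K, ∀ w ∈ K, 0 ≤ ⟪F v, w - v⟫ := by
  have hproj : ∀ u, ∃ v ∈ K, ∀ w ∈ K, ⟪u - v, w - v⟫ ≤ 0 := fun u => by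
    obtain ⟨v, hvK, hv⟩ := exists_norm_eq_iInf_of_complete_convex hne hcl.isComplete hco u
    exact ⟨v, hvK, (norm_eq_iInf_iff_real_inner_le_zero hco hvK).1 hv⟩
  choose P hPK hP using hproj
  set S := Λ ^ 2 + μ ^ 2
  have hS : 0 < S := by positivity
  set η := μ / S
  set k2 := 1 - μ ^ 2 / S
  have hk2 : 0 ≤ k2 := by
    rw [sub_nonneg, div_le_one hS]; nlinarith [sq_nonneg Λ]
  have hk2_lt : k2 < 1 := sub_lt_self 1 (by positivity)
  have : CompleteSpace K := hcl.completeSpace_coe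
  have : Nonempty K := hne.to_subtype
  let T : K → K := fun v => ⟨P (v - η • F v), hPK _⟩
  have hT : ContractingWith (Real.toNNReal √k2) T := by
    refine ⟨by rw [Real.toNNReal_lt_one, sqrt_lt' one_pos, one_pow]; exact hk2_lt, ?_⟩
    refine LipschitzWith.of_dist_le_mul fun v w => ?_
    rw [Real.coe_toNNReal _ (sqrt_nonneg _), Subtype.dist_eq, Subtype.dist_eq, dist_eq_norm,
      dist_eq_norm]
    refine (norm_sub_le_of_forall_inner_le_zero (hPK _) (hPK _) (hP _) (hP _)).trans ?_
    have hstep := norm_sub_smul_sub_sub_smul_sq_le (hmono v v.2 w w.2) (hlip v v.2 w w.2)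
      (div_pos hμ hS).le
    have hk : 1 - 2 * η * μ + η ^ 2 * Λ ^ 2 ≤ k2 := by
      simp only [η, k2]
      rw [div_pow, ← sub_nonneg]
      have : 1 - μ ^ 2 / S - (1 - 2 * (μ / S) * μ + μ ^ 2 / S ^ 2 * Λ ^ 2) =
          μ ^ 2 * μ ^ 2 / S ^ 2 := by
        field_simp; ring
      rw [this]; positivity
    rw [← sqrt_sq (norm_nonneg _), ← sqrt_sq (norm_nonneg ((v : H) - w)), ← sqrt_mul hk2]
    exact sqrt_le_sqrt (hstep.trans (mul_le_mul_of_nonneg_right hk (sq_nonneg _)))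
  obtain ⟨v, hv, -⟩ := hT.exists_fixedPoint (Classical.arbitrary K) (edist_ne_top _ _)
  have hfix : P ((v : H) - η • F v) = v := congrArg Subtype.val hv
  refine ⟨v, v.2, fun w hw => ?_⟩
  have h := hP ((v : H) - η • F v) w hw
  rw [hfix, sub_sub_cancel_left, inner_neg_left, real_inner_smul_left] at h
  nlinarith [div_pos hμ hS]

end VariationalInequality

section TruncatedSimplex

variable {ι : Type*} [Fintype ι]

def truncSimplex (δ : ℝ) (ι : Type*) [Fintype ι] : Set (ι → ℝ) :=
  {x | (∀ i, δ ≤ x i) ∧ ∑ i, x i = 1}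

lemma convex_truncSimplex (δ : ℝ) : Convex ℝ (truncSimplex δ ι) := by
  rintro x ⟨hx, hx1⟩ y ⟨hy, hy1⟩ a b ha hb hab
  refine ⟨fun i => ?_, ?_⟩
  · have := add_le_add (mul_le_mul_of_nonneg_left (hx i) ha) (mul_le_mul_of_nonneg_left (hy i) hb)
    rw [← add_mul, hab, one_mul] at this
    simpa using this
  · simp [Finset.sum_add_distrib, ← Finset.mul_sum, hx1, hy1, hab]

lemma isClosed_truncSimplex (δ : ℝ) : IsClosed (truncSimplex δ ι) := by
  have : truncSimplex δ ι = (⋂ i, {x | δ ≤ x i}) ∩ {x | ∑ i, x i = 1} := by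
    ext x; simp [truncSimplex]
  rw [this]
  exact (isClosed_iInter fun i => isClosed_le continuous_const (continuous_apply i)).inter
    (isClosed_eq (continuous_finsetSum _ fun i _ => continuous_apply i) continuous_const)

lemma le_of_forall_sum_mul_sub_nonneg [DecidableEq ι] {δ : ℝ} {x g : ι → ℝ}
    (hx : x ∈ truncSimplex δ ι) (hvi : ∀ u ∈ truncSimplex δ ι, 0 ≤ ∑ k, g k * (u k - x k))
    (i : ι) {j : ι} (hj : δ < x j) : g j ≤ g i := by
  rcases eq_or_ne i j with rfl | hij
  · rfl
  set s := x j - δ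
  have hs : 0 < s := sub_pos.2 hj
  -- move the mass `s` from action `j` to action `i`
  have hu : x + s • (Pi.single i 1 - Pi.single j 1) ∈ truncSimplex δ ι := by
    refine ⟨fun k => ?_, ?_⟩
    · rcases eq_or_ne k j with rfl | hkj
      · simp [hij, s]
      · have := hx.1 k
        rcases eq_or_ne k i with rfl | hki
        · simp [hkj]; linarith
        · simp [hki, hkj]; linarith
    · simp [Finset.sum_add_distrib, ← Finset.mul_sum, hx.2]
  have := hvi _ hu
  simp [mul_sub, Finset.sum_sub_distrib, Pi.single_apply] at this
  nlinarith

lemma lt_of_forall_entropic_sum_nonneg {ε δ M : ℝ} (hε : 0 < ε) (hδ : 0 < δ) {x c : ι → ℝ}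
    (hx : x ∈ truncSimplex δ ι) (hc : ∀ k, |c k| ≤ M)
    (hδM : δ * Fintype.card ι < exp (-(2 * M / ε)))
    (hvi : ∀ u ∈ truncSimplex δ ι, 0 ≤ ∑ k, (ε * log (x k) - c k) * (u k - x k)) (i : ι) :
    δ < x i := by
  classical
  by_contra! hi
  have hxi : x i = δ := le_antisymm hi (hx.1 i)
  set n : ℝ := (Fintype.card ι : ℝ)
  have hn : 0 < n := Nat.cast_pos.2 (Fintype.card_pos_iff.2 ⟨i⟩)
  have hM : 0 ≤ M := (abs_nonneg _).trans (hc i)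
  obtain ⟨j, -, hj⟩ := Finset.exists_le_of_sum_le (f := fun _ => 1 / n) (g := x)
    ⟨i, Finset.mem_univ _⟩ (by simp [hx.2, n, hn.ne'])
  have hδn : δ * n < 1 := hδM.trans_le (exp_le_one_iff.2 (neg_nonpos.2 (by positivity)))
  have hjδ : δ < x j := lt_of_lt_of_le (by rw [lt_div_iff₀ hn]; linarith) hj
  have hg := le_of_forall_sum_mul_sub_nonneg hx hvi i hjδ
  rw [hxi] at hg
  have hlogj : -log n ≤ log (x j) := by
    rw [← log_inv, ← one_div]; exact log_le_log (by positivity) hj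
  have hlogδ : log δ + log n < -(2 * M / ε) := by
    rw [← log_mul hδ.ne' hn.ne', ← log_exp (-(2 * M / ε))]
    exact log_lt_log (by positivity) hδM
  have hεM : ε * (2 * M / ε) = 2 * M := by field_simp
  have hci := abs_le.1 (hc i)
  have hcj := abs_le.1 (hc j)
  nlinarith [mul_le_mul_of_nonneg_left hlogj hε.le, mul_lt_mul_of_pos_left hlogδ hε]

lemma softmax_eq_of_forall_entropic_sum_nonneg {m : ℕ} {ε δ M : ℝ} (hε : 0 < ε) (hδ : 0 < δ)
    {x c : Fin m → ℝ} (hx : x ∈ truncSimplex δ (Fin m)) (hc : ∀ k, |c k| ≤ M)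
    (hδM : δ * m < exp (-(2 * M / ε)))
    (hvi : ∀ u ∈ truncSimplex δ (Fin m), 0 ≤ ∑ k, (ε * log (x k) - c k) * (u k - x k)) :
    softmax ε c = x := by
  have hint := lt_of_forall_entropic_sum_nonneg hε hδ hx hc (by simpa using hδM) hvi
  exact softmax_eq_of_forall_mul_log_sub_eq ε hε.ne' (fun k => hδ.trans (hint k)) hx.2
    fun j k => le_antisymm (le_of_forall_sum_mul_sub_nonneg hx hvi k (hint j))
      (le_of_forall_sum_mul_sub_nonneg hx hvi j (hint k))

end TruncatedSimplex

abbrev ProfileSpace {N : ℕ} (nAct : Fin N → ℕ) :=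
  PiLp 2 fun p : Fin N => EuclideanSpace ℝ (Fin (nAct p))

namespace ProfileSpace

variable {N : ℕ} {nAct : Fin N → ℕ}

def toPi (v : ProfileSpace nAct) : ∀ p, Fin (nAct p) → ℝ := fun p i => v p i

lemma inner_eq_sum (v w : ProfileSpace nAct) : ⟪v, w⟫ = ∑ p, ∑ i, v p i * w p i := by
  simp [PiLp.inner_apply, mul_comm]

lemma abs_apply_le_norm (v : ProfileSpace nAct) (p : Fin N) (i : Fin (nAct p)) : |v p i| ≤ ‖v‖ := by
  simpa using (PiLp.norm_apply_le (v p) i).trans (PiLp.norm_apply_le v p)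

lemma norm_le_of_forall_abs_apply_le {v : ProfileSpace nAct} {C : ℝ} (hC : 0 ≤ C)
    (h : ∀ p i, |v p i| ≤ C) : ‖v‖ ≤ √(∑ p, (nAct p : ℝ)) * C := by
  rw [← sqrt_sq hC, ← sqrt_mul (Finset.sum_nonneg fun p _ => Nat.cast_nonneg _)]
  refine le_sqrt_of_sq_le ?_
  simp only [PiLp.norm_sq_eq_of_L2, Real.norm_eq_abs, Finset.sum_mul]
  refine Finset.sum_le_sum fun p _ => ?_
  simpa using Finset.sum_le_sum fun i (_ : i ∈ Finset.univ) =>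
    pow_le_pow_left₀ (abs_nonneg _) (h p i) 2

lemma dist_toPi_le (v w : ProfileSpace nAct) : dist (toPi v) (toPi w) ≤ ‖v - w‖ :=
  dist_pi_le_iff (norm_nonneg _) |>.2 fun p => dist_pi_le_iff (norm_nonneg _) |>.2 fun i => by
    simpa [toPi, Real.dist_eq] using abs_apply_le_norm (v - w) p i

def truncProfiles (δ : ℝ) (nAct : Fin N → ℕ) : Set (ProfileSpace nAct) :=
  {v | ∀ p, ⇑(v p) ∈ truncSimplex δ (Fin (nAct p))}

lemma convex_truncProfiles (δ : ℝ) : Convex ℝ (truncProfiles δ nAct) :=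
  fun _ hv _ hw _ _ ha hb hab p => by
    simpa using convex_truncSimplex δ (hv p) (hw p) ha hb hab

lemma isClosed_truncProfiles (δ : ℝ) : IsClosed (truncProfiles δ nAct) := by
  have : truncProfiles δ nAct =
      ⋂ p, (fun v : ProfileSpace nAct => ⇑(v p)) ⁻¹' truncSimplex δ (Fin (nAct p)) := by
    ext; simp [truncProfiles]
  rw [this]
  exact isClosed_iInter fun p => (isClosed_truncSimplex δ).preimage (by fun_prop)

lemma truncProfiles_nonempty {δ : ℝ} (hn : ∀ p, 0 < nAct p) (hδ : ∀ p, δ * nAct p ≤ 1) :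
    (truncProfiles δ nAct).Nonempty := by
  refine ⟨WithLp.toLp 2 fun p => WithLp.toLp 2 fun _ => 1 / (nAct p : ℝ),
    fun p => ⟨fun i => ?_, ?_⟩⟩
  · have := hδ p
    rw [le_div_iff₀ (Nat.cast_pos.2 (hn p))]
    linarith
  · simp [(Nat.cast_pos.2 (hn p)).ne']

lemma toPi_mem_simplexProd {δ : ℝ} (hδ : 0 ≤ δ) {v : ProfileSpace nAct}
    (hv : v ∈ truncProfiles δ nAct) : toPi v ∈ simplexProd N nAct :=
  fun p => ⟨fun i => hδ.trans ((hv p).1 i), (hv p).2⟩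

lemma le_one_of_mem_truncProfiles {δ : ℝ} (hδ : 0 ≤ δ) {v : ProfileSpace nAct}
    (hv : v ∈ truncProfiles δ nAct) (p : Fin N) (i : Fin (nAct p)) : v p i ≤ 1 :=
  (hv p).2 ▸ Finset.single_le_sum (fun j _ => hδ.trans ((hv p).1 j)) (Finset.mem_univ i)

lemma sum_mul_sub_nonneg_of_forall_inner_nonneg {δ : ℝ} {g v : ProfileSpace nAct}
    (hv : v ∈ truncProfiles δ nAct) (hvi : ∀ w ∈ truncProfiles δ nAct, 0 ≤ ⟪g, w - v⟫) (p : Fin N)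
    {u : Fin (nAct p) → ℝ} (hu : u ∈ truncSimplex δ (Fin (nAct p))) :
    0 ≤ ∑ i, g p i * (u i - v p i) := by
  classical
  set w : ProfileSpace nAct := WithLp.toLp 2 (Function.update (WithLp.ofLp v) p (WithLp.toLp 2 u))
  have hw : w ∈ truncProfiles δ nAct := fun p' => by
    rcases eq_or_ne p' p with rfl | hp
    · simpa [w] using hu
    · simpa [w, hp] using hv p'
  have := hvi w hw
  rw [inner_eq_sum, Finset.sum_eq_single p (fun p' _ hp => by simp [w, hp]) (by simp)] at this
  simpa [w] using this

noncomputable def entropicField (ε : ℝ) (U : (∀ p, Fin (nAct p) → ℝ) → ∀ p, Fin (nAct p) → ℝ)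
    (v : ProfileSpace nAct) : ProfileSpace nAct :=
  WithLp.toLp 2 fun p => WithLp.toLp 2 fun i => ε * log (v p i) - U (toPi v) p i

variable {ε δ : ℝ} {U : (∀ p, Fin (nAct p) → ℝ) → ∀ p, Fin (nAct p) → ℝ}

lemma entropicField_strongly_monotone (hε : 0 < ε) (hδ : 0 < δ)
    (hU_mono : ∀ x ∈ simplexProd N nAct, ∀ x' ∈ simplexProd N nAct,
      ∑ p, ∑ i, (x p i - x' p i) * (U x p i - U x' p i) ≤ 0)
    {v w : ProfileSpace nAct} (hv : v ∈ truncProfiles δ nAct) (hw : w ∈ truncProfiles δ nAct) :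
    ε * ‖v - w‖ ^ 2 ≤ ⟪entropicField ε U v - entropicField ε U w, v - w⟫ := by
  have hlog : ∀ p i, (v p i - w p i) ^ 2 ≤ (v p i - w p i) * (log (v p i) - log (w p i)) :=
    fun p i => sq_sub_le_sub_mul_log_sub_log (hδ.trans_le ((hv p).1 i))
      (le_one_of_mem_truncProfiles hδ.le hv p i) (hδ.trans_le ((hw p).1 i))
      (le_one_of_mem_truncProfiles hδ.le hw p i)
  have hmono : ∑ p, ∑ i, (v p i - w p i) * (U (toPi v) p i - U (toPi w) p i) ≤ 0 :=
    hU_mono _ (toPi_mem_simplexProd hδ.le hv) _ (toPi_mem_simplexProd hδ.le hw)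
  have hsum : ε * ∑ p, ∑ i, (v p i - w p i) ^ 2 ≤
      ε * ∑ p, ∑ i, (v p i - w p i) * (log (v p i) - log (w p i)) :=
    mul_le_mul_of_nonneg_left (Finset.sum_le_sum fun p _ => Finset.sum_le_sum fun i _ => hlog p i)
      hε.le
  have hrhs : ⟪entropicField ε U v - entropicField ε U w, v - w⟫ =
      ε * ∑ p, ∑ i, (v p i - w p i) * (log (v p i) - log (w p i)) -
        ∑ p, ∑ i, (v p i - w p i) * (U (toPi v) p i - U (toPi w) p i) := by
    simp only [inner_eq_sum, entropicField, PiLp.sub_apply, Finset.mul_sum,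
      ← Finset.sum_sub_distrib]
    exact Finset.sum_congr rfl fun p _ => Finset.sum_congr rfl fun i _ => by ring
  rw [hrhs, ← real_inner_self_eq_norm_sq, inner_eq_sum]
  simp only [PiLp.sub_apply, ← sq]
  linarith

lemma norm_entropicField_sub_le (hε : 0 ≤ ε) (hδ : 0 < δ) {L : NNReal}
    (hU_lip : LipschitzOnWith L U (simplexProd N nAct))
    {v w : ProfileSpace nAct} (hv : v ∈ truncProfiles δ nAct) (hw : w ∈ truncProfiles δ nAct) :
    ‖entropicField ε U v - entropicField ε U w‖ ≤
      √(∑ p, (nAct p : ℝ)) * (ε / δ + L) * ‖v - w‖ := by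
  rw [mul_assoc]
  refine norm_le_of_forall_abs_apply_le (by positivity) fun p i => ?_
  have hlog : ε * |log (v p i) - log (w p i)| ≤ ε / δ * ‖v - w‖ := by
    rw [div_mul_eq_mul_div, mul_div_assoc]
    refine mul_le_mul_of_nonneg_left ((abs_log_sub_log_le hδ ((hv p).1 i) ((hw p).1 i)).trans ?_) hε
    gcongr
    simpa using abs_apply_le_norm (v - w) p i
  have hU : |U (toPi v) p i - U (toPi w) p i| ≤ L * ‖v - w‖ := by
    rw [← Real.dist_eq]
    exact (dist_le_pi_dist (U (toPi v) p) _ i).trans <| (dist_le_pi_dist (U (toPi v)) _ p).trans <|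
      (hU_lip.dist_le_mul _ (toPi_mem_simplexProd hδ.le hv) _ (toPi_mem_simplexProd hδ.le hw)).trans
        (mul_le_mul_of_nonneg_left (dist_toPi_le v w) L.2)
  have hcoord : (entropicField ε U v - entropicField ε U w) p i =
      ε * (log (v p i) - log (w p i)) - (U (toPi v) p i - U (toPi w) p i) := by
    simp only [entropicField, PiLp.sub_apply]; ring
  rw [hcoord, add_mul]
  refine (abs_sub _ _).trans (add_le_add ?_ hU)
  rwa [abs_mul, abs_of_nonneg hε]

end ProfileSpace

open ProfileSpace in
theorem exists_fixedPoint_of_monotone {ε : ℝ} {N : ℕ} {nAct : Fin N → ℕ}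
    {U : (∀ p, Fin (nAct p) → ℝ) → ∀ p, Fin (nAct p) → ℝ} {L : NNReal} (hε : 0 < ε)
    (hn : ∀ p, 0 < nAct p) (hU_lip : LipschitzOnWith L U (simplexProd N nAct))
    (hU_mono : ∀ x ∈ simplexProd N nAct, ∀ x' ∈ simplexProd N nAct,
      ∑ p, ∑ i, (x p i - x' p i) * (U x p i - U x' p i) ≤ 0) :
    ∃ zs, U (softmaxBlk ε zs) = zs := by
  obtain ⟨M, hM⟩ := (isCompact_simplexProd N nAct).exists_bound_of_continuousOn hU_lip.continuousOn
  have hUM : ∀ x ∈ simplexProd N nAct, ∀ p i, |U x p i| ≤ M := fun x hx p i =>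
    (norm_le_pi_norm (U x p) i).trans ((norm_le_pi_norm (U x) p).trans (hM x hx))
  have hM0 : 0 ≤ M := (norm_nonneg _).trans (hM _ (softmaxBlk_mem_simplexProd (ε := ε) hn 0))
  -- `δ n_p < exp (-2M/ε)` is what keeps the variational solution off the faces
  set δ := exp (-(2 * M / ε)) / (∑ p, (nAct p : ℝ) + 1)
  have hδ : 0 < δ := by positivity
  have hδM : ∀ p, δ * nAct p < exp (-(2 * M / ε)) := fun p => by
    have : (nAct p : ℝ) ≤ ∑ p, (nAct p : ℝ) :=
      Finset.single_le_sum (fun p _ => Nat.cast_nonneg (nAct p)) (Finset.mem_univ p)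
    rw [div_mul_eq_mul_div, div_lt_iff₀ (by positivity)]
    exact mul_lt_mul_of_pos_left (by linarith) (exp_pos _)
  have hδ1 : ∀ p, δ * nAct p ≤ 1 := fun p =>
    (hδM p).le.trans (exp_le_one_iff.2 (neg_nonpos.2 (by positivity)))
  obtain ⟨v, hv, hvi⟩ := exists_forall_inner_nonneg_of_strongly_monotone
    (truncProfiles_nonempty hn hδ1) (isClosed_truncProfiles δ) (convex_truncProfiles δ) hε
    (fun v hv w hw => entropicField_strongly_monotone hε hδ hU_mono hv hw)
    (fun v hv w hw => norm_entropicField_sub_le hε.le hδ hU_lip hv hw)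
  refine ⟨U (toPi v), ?_⟩
  have hfix : softmaxBlk ε (U (toPi v)) = toPi v := funext fun p =>
    softmax_eq_of_forall_entropic_sum_nonneg hε hδ (hv p) (hUM _ (toPi_mem_simplexProd hδ.le hv) p)
      (hδM p) fun u hu => sum_mul_sub_nonneg_of_forall_inner_nonneg hv hvi p hu
  rw [hfix]

section Lyapunov

variable {ε γ : ℝ} {N : ℕ} {nAct : Fin N → ℕ} {U : (∀ p, Fin (nAct p) → ℝ) → ∀ p, Fin (nAct p) → ℝ}
  {zs : ∀ p, Fin (nAct p) → ℝ}

lemma sum_relEntropy_deriv_le (hε : 0 < ε) (hγ : 0 ≤ γ) (hn : ∀ p, 0 < nAct p)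
    (hU_mono : ∀ x ∈ simplexProd N nAct, ∀ x' ∈ simplexProd N nAct,
      ∑ p, ∑ i, (x p i - x' p i) * (U x p i - U x' p i) ≤ 0)
    (hzs : U (softmaxBlk ε zs) = zs) (w : ∀ p, Fin (nAct p) → ℝ) :
    ∑ p, (∑ i, (softmaxBlk ε w p i - softmaxBlk ε zs p i) *
        (γ * (U (softmaxBlk ε w) p i - w p i))) / ε ≤
      -γ * ∑ p, relEntropy (softmaxBlk ε zs p) (softmaxBlk ε w p) := by
  set x := softmaxBlk ε w
  set xs := softmaxBlk ε zs
  have hmono := hU_mono x (softmaxBlk_mem_simplexProd hn w) xs (softmaxBlk_mem_simplexProd hn zs)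
  have hcross : ∀ p, ε * relEntropy (xs p) (x p) ≤ ∑ i, (x p i - xs p i) * (w p i - zs p i) :=
    fun p => by
      change ε * relEntropy (softmax ε (zs p)) (softmax ε (w p)) ≤
        ∑ i, (softmax ε (w p) i - softmax ε (zs p) i) * (w p i - zs p i)
      rw [inner_softmax_sub_softmax ε hε.ne' (hn p)]
      have := relEntropy_nonneg (softmax_pos ε (hn p) (w p)) (softmax_pos ε (hn p) (zs p))
        ((sum_softmax ε (hn p) _).trans (sum_softmax ε (hn p) _).symm)
      nlinarith
  have hsplit : ∑ p, ∑ i, (x p i - xs p i) * (γ * (U x p i - w p i)) =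
      γ * ∑ p, ∑ i, (x p i - xs p i) * (U x p i - U xs p i) -
        γ * ∑ p, ∑ i, (x p i - xs p i) * (w p i - zs p i) := by
    simp only [hzs, Finset.mul_sum, ← Finset.sum_sub_distrib]
    exact Finset.sum_congr rfl fun p _ => Finset.sum_congr rfl fun i _ => by ring
  rw [← Finset.sum_div, div_le_iff₀ hε, hsplit]
  have := Finset.sum_le_sum fun p (_ : p ∈ Finset.univ) => hcross p
  rw [← Finset.mul_sum] at this
  nlinarith [mul_le_mul_of_nonneg_left this hγ, mul_nonpos_of_nonneg_of_nonpos hγ hmono]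

lemma tendsto_sum_relEntropy_softmaxBlk (hε : 0 < ε) (hγ : 0 < γ) (hn : ∀ p, 0 < nAct p)
    (hU_mono : ∀ x ∈ simplexProd N nAct, ∀ x' ∈ simplexProd N nAct,
      ∑ p, ∑ i, (x p i - x' p i) * (U x p i - U x' p i) ≤ 0)
    (hzs : U (softmaxBlk ε zs) = zs) {z : ℝ → ∀ p, Fin (nAct p) → ℝ}
    (hz : ∀ t, 0 ≤ t → ∀ p, ∀ i,
      HasDerivAt (fun s => z s p i) (γ * (U (softmaxBlk ε (z t)) p i - z t p i)) t) :
    Tendsto (fun t => ∑ p, relEntropy (softmaxBlk ε zs p) (softmaxBlk ε (z t) p)) atTop (𝓝 0) :=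
  tendsto_zero_of_hasDerivAt_le_neg_mul_add hγ (g := 0)
    (fun t ht => HasDerivAt.fun_sum fun p _ =>
      hasDerivAt_relEntropy_softmax ε (hn p) (sum_softmax ε (hn p) (zs p)) (hz t ht p))
    (fun t _ => by
      rw [Pi.zero_apply, add_zero]
      exact sum_relEntropy_deriv_le hε hγ.le hn hU_mono hzs (z t))
    tendsto_const_nhds
    (fun t => Finset.sum_nonneg fun p _ => relEntropy_nonneg (softmax_pos ε (hn p) (zs p))
      (softmax_pos ε (hn p) (z t p)) ((sum_softmax ε (hn p) _).trans (sum_softmax ε (hn p) _).symm))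

lemma tendsto_of_tendsto_sum_relEntropy {β : Type*} {l : Filter β} {xs : ∀ p, Fin (nAct p) → ℝ}
    {x : β → ∀ p, Fin (nAct p) → ℝ} (hxs : ∀ p i, 0 < xs p i) (hxs1 : ∀ p, ∑ i, xs p i = 1)
    (hx : ∀ b p i, 0 < x b p i) (hx1 : ∀ b p, ∑ i, x b p i = 1)
    (h : Tendsto (fun b => ∑ p, relEntropy (xs p) (x b p)) l (𝓝 0)) : Tendsto x l (𝓝 xs) := by
  refine tendsto_pi_nhds.2 fun p => tendsto_pi_nhds.2 fun i => ?_
  rw [tendsto_iff_dist_tendsto_zero]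
  refine squeeze_zero (fun _ => dist_nonneg) (fun b => ?_)
    (by simpa only [mul_zero, sqrt_zero] using (h.const_mul 4).sqrt)
  rw [dist_comm, Real.dist_eq]
  refine abs_le_sqrt <|
    (sq_sub_le_four_mul_relEntropy (hxs p) (hx b p) (hxs1 p) (hx1 b p) i).trans ?_
  gcongr
  exact Finset.single_le_sum (f := fun p => relEntropy (xs p) (x b p))
    (fun p _ => relEntropy_nonneg (hxs p) (hx b p) ((hxs1 p).trans (hx1 b p).symm))
    (Finset.mem_univ p)

end Lyapunov

theorem expdrl_convergence_monotone_general (ε γ : ℝ) (hε : 0 < ε) (hγ : 0 < γ)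
    (N : ℕ) (nAct : Fin N → ℕ) (hn : ∀ p, 0 < nAct p)
    (U : (∀ p, Fin (nAct p) → ℝ) → ∀ p, Fin (nAct p) → ℝ)
    (L : NNReal) (hU_lip : LipschitzOnWith L U (simplexProd N nAct))
    (hU_mono : ∀ x ∈ simplexProd N nAct, ∀ x' ∈ simplexProd N nAct,
      ∑ p, ∑ i, (x p i - x' p i) * (U x p i - U x' p i) ≤ 0)
    (z : ℝ → ∀ p, Fin (nAct p) → ℝ)
    (hz : ∀ t, 0 ≤ t → ∀ p, ∀ i,
      HasDerivAt (fun s => z s p i) (γ * (U (softmaxBlk ε (z t)) p i - z t p i)) t) :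
    ∃ zs, U (softmaxBlk ε zs) = zs ∧
      Tendsto z atTop (nhds zs) ∧
      Tendsto (fun t => softmaxBlk ε (z t)) atTop (nhds (softmaxBlk ε zs)) := by
  obtain ⟨zs, hzs⟩ := exists_fixedPoint_of_monotone hε hn hU_lip hU_mono
  have hx : Tendsto (fun t => softmaxBlk ε (z t)) atTop (𝓝 (softmaxBlk ε zs)) :=
    tendsto_of_tendsto_sum_relEntropy (fun p => softmax_pos ε (hn p) (zs p))
      (fun p => sum_softmax ε (hn p) (zs p)) (fun t p => softmax_pos ε (hn p) (z t p))
      (fun t p => sum_softmax ε (hn p) (z t p))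
      (tendsto_sum_relEntropy_softmaxBlk hε hγ hn hU_mono hzs hz)
  have hU : Tendsto (fun t => U (softmaxBlk ε (z t))) atTop (𝓝 zs) := by
    have := (hU_lip.continuousOn _ (softmaxBlk_mem_simplexProd hn zs)).tendsto.comp
      (tendsto_nhdsWithin_iff.2 ⟨hx, .of_forall fun t => softmaxBlk_mem_simplexProd hn (z t)⟩)
    rwa [hzs] at this
  refine ⟨zs, hzs, tendsto_pi_nhds.2 fun p => tendsto_pi_nhds.2 fun i => ?_, hx⟩
  exact tendsto_of_hasDerivAt_mul_sub hγ (fun t ht => hz t ht p i)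
    (tendsto_pi_nhds.1 (tendsto_pi_nhds.1 hU p) i)

/-- Theorem 1 (convergence of EXP-D-RL in monotone games): if `−U` is monotone on
`Δ`, `U` is Lipschitz on `Δ`, and the fixed points of `z ↦ U(σ(z))` are finitely
many, then every solution of `ż = γ(U(σ(z)) − z)` on `[0, ∞)` converges to some
fixed point `z̄* = U(σ(z̄*))`, and `σ(z(t)) → σ(z̄*)` (a Nash distribution). -/
theorem expdrl_convergence_monotone (ε γ : ℝ) (hε : 0 < ε) (hγ : 0 < γ)
    (N : ℕ) (nAct : Fin N → ℕ) (hn : ∀ p, 0 < nAct p)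
    (U : (∀ p, Fin (nAct p) → ℝ) → ∀ p, Fin (nAct p) → ℝ)
    (L : NNReal) (hU_lip : LipschitzOnWith L U (simplexProd N nAct))
    (hU_mono : ∀ x ∈ simplexProd N nAct, ∀ x' ∈ simplexProd N nAct,
      ∑ p, ∑ i, (x p i - x' p i) * (U x p i - U x' p i) ≤ 0)
    (hfin : {w : ∀ p, Fin (nAct p) → ℝ | U (softmaxBlk ε w) = w}.Finite)
    (z : ℝ → ∀ p, Fin (nAct p) → ℝ)
    (hz : ∀ t, 0 ≤ t → ∀ p, ∀ i,
      HasDerivAt (fun s => z s p i) (γ * (U (softmaxBlk ε (z t)) p i - z t p i)) t) :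
    ∃ zs, U (softmaxBlk ε zs) = zs ∧
      Tendsto z atTop (nhds zs) ∧
      Tendsto (fun t => softmaxBlk ε (z t)) atTop (nhds (softmaxBlk ε zs)) :=
  expdrl_convergence_monotone_general ε γ hε hγ N nAct hn U L hU_lip hU_mono z hz
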